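/- arXiv:2601.05130 — 4 statements merged into one kernel-verified Lean document; each statement's English description precedes it below -/
import Mathlib

section
/- Let b : ℝ^d → ℝ^d be L-Lipschitz, R > 0, 0 < r < 1/3, r̄ > 0, and let x, y ∈ ℝ^d with |y - x - b(x)| ≥ 18(L+1) r R + 6 r̄ R. Then for every pair (x', y') with |x' - (x + 2rR·(y - x - b(x))/|y - x - b(x)|)| ≤ rR and |x' + b(x') - y'| ≤ r̄ R, one has Δ := |x-y'|² + |x'-y|² - |x-y|² - |x'-y'|² ≤ - rR·|y - x - b(x)|. -/
set_option maxHeartbeats 800000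

open Real Set

theorem stmt_7 (d : ℕ) (L R r rbar : ℝ)
    (b : EuclideanSpace ℝ (Fin d) → EuclideanSpace ℝ (Fin d))
    (hL : 0 ≤ L) (hlip : ∀ u v, ‖b u - b v‖ ≤ L * ‖u - v‖)
    (hR : 0 < R) (hr : 0 < r) (hr3 : r < 1/3) (hrbar : 0 < rbar)
    (x y : EuclideanSpace ℝ (Fin d))
    (hfar : 18 * (L + 1) * r * R + 6 * rbar * R ≤ ‖y - x - b x‖)
    (x' y' : EuclideanSpace ℝ (Fin d))
    (hx' : ‖x' - (x + (2 * r * R / ‖y - x - b x‖) • (y - x - b x))‖ ≤ r * R)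
    (hy' : ‖x' + b x' - y'‖ ≤ rbar * R) :
    ‖x - y'‖^2 + ‖x' - y‖^2 - ‖x - y‖^2 - ‖x' - y'‖^2 ≤ -(r * R * ‖y - x - b x‖) := by
  set w : EuclideanSpace ℝ (Fin d) := y - x - b x with hw
  set W := ‖w‖ with hWdef
  have hW : 0 < W := lt_of_lt_of_le (by positivity) hfar
  have hWne : W ≠ 0 := ne_of_gt hW
  set c := 2 * r * R / W with hc
  have hc0 : 0 ≤ c := by positivity
  have hcW : c * W = 2 * r * R := div_mul_cancel₀ _ hWne
  have hnorm_cw : ‖c • w‖ = 2 * r * R := by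
    rw [norm_smul, Real.norm_eq_abs, abs_of_nonneg hc0, ← hWdef, hcW]
  have hx'2 : ‖x' - x - c • w‖ ≤ r * R := by
    have h : x' - (x + c • w) = x' - x - c • w := by abel
    rw [← h]; exact hx'
  have hu : ‖x' - x‖ ≤ 3 * r * R := by
    have h : x' - x = (x' - x - c • w) + c • w := by abel
    have htri := norm_add_le (x' - x - c • w) (c • w)
    rw [← h, hnorm_cw] at htri
    linarith [hx'2]
  have hinner : r * R * W ≤ inner ℝ (x' - x) w := by
    have hsplit : (inner ℝ (x' - x) w : ℝ) = inner ℝ (x' - x - c • w) w + c * inner ℝ w w := by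
      rw [← real_inner_smul_left]
      rw [← inner_add_left]
      congr 1
      abel
    have h1 : -(r * R * W) ≤ (inner ℝ (x' - x - c • w) w : ℝ) := by
      have := abs_real_inner_le_norm (x' - x - c • w) w
      have h2 : |(inner ℝ (x' - x - c • w) w : ℝ)| ≤ r * R * W := by
        calc |(inner ℝ (x' - x - c • w) w : ℝ)| ≤ ‖x' - x - c • w‖ * ‖w‖ := this
        _ ≤ r * R * W := by
          apply mul_le_mul_of_nonneg_right hx'2 (norm_nonneg _)
      linarith [neg_abs_le (inner ℝ (x' - x - c • w) w : ℝ)]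
    have h3 : c * (inner ℝ w w : ℝ) = 2 * r * R * W := by
      rw [real_inner_self_eq_norm_sq, ← hWdef]
      have : W ^ 2 = W * W := sq W
      rw [this, ← mul_assoc, hcW]
    rw [hsplit, h3]; linarith
  have key : ‖x - y'‖^2 + ‖x' - y‖^2 - ‖x - y‖^2 - ‖x' - y'‖^2
      = 2 * inner ℝ (x' - x) (y' - y) := by
    simp only [@norm_sub_sq_real, inner_sub_left, inner_sub_right,
      real_inner_self_eq_norm_sq]
    ring_nf
  rw [key]
  have hdec : y' - y = (y' - x' - b x') + (x' - x) + (b x' - b x) - w := by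
    rw [hw]; abel
  have hexp : (inner ℝ (x' - x) (y' - y) : ℝ) =
      inner ℝ (x' - x) (y' - x' - b x') + inner ℝ (x' - x) (x' - x)
        + inner ℝ (x' - x) (b x' - b x) - inner ℝ (x' - x) w := by
    rw [hdec, inner_sub_right, inner_add_right, inner_add_right]
  have h1 : (inner ℝ (x' - x) (y' - x' - b x') : ℝ) ≤ 3 * r * R * (rbar * R) := by
    have hne : ‖y' - x' - b x'‖ = ‖x' + b x' - y'‖ := by
      rw [← norm_neg]; congr 1; abel
    calc (inner ℝ (x' - x) (y' - x' - b x') : ℝ) ≤ ‖x' - x‖ * ‖y' - x' - b x'‖ :=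
        real_inner_le_norm _ _
    _ ≤ 3 * r * R * (rbar * R) := by
        rw [hne]
        apply mul_le_mul hu hy' (norm_nonneg _) (by positivity)
  have h2 : (inner ℝ (x' - x) (x' - x) : ℝ) ≤ 9 * r^2 * R^2 := by
    rw [real_inner_self_eq_norm_sq]
    nlinarith [norm_nonneg (x' - x)]
  have h3 : (inner ℝ (x' - x) (b x' - b x) : ℝ) ≤ 9 * L * r^2 * R^2 := by
    have hb := hlip x' x
    have hn := norm_nonneg (x' - x)
    calc (inner ℝ (x' - x) (b x' - b x) : ℝ) ≤ ‖x' - x‖ * ‖b x' - b x‖ :=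
        real_inner_le_norm _ _
    _ ≤ ‖x' - x‖ * (L * ‖x' - x‖) := mul_le_mul_of_nonneg_left hb hn
    _ ≤ 9 * L * r^2 * R^2 := by
        have husq : ‖x' - x‖ * ‖x' - x‖ ≤ (3 * r * R) * (3 * r * R) :=
          mul_le_mul hu hu hn (by positivity)
        nlinarith [husq, hL]
  have hfar' : (18 * (L + 1) * r * R + 6 * rbar * R) * (r * R) ≤ W * (r * R) :=
    mul_le_mul_of_nonneg_right hfar (by positivity)
  rw [hexp]
  nlinarith [hinner, h1, h2, h3, hfar']
end

section
/- Let Ω ⊆ ℝ^d be open and convex, μ a probability measure on ℝ^d, q ≥ 2, ε > 0, g : ℝ^d → ℝ measurable, and suppose f : Ω → ℝ is continuous and satisfies, for every x ∈ Ω, ∫ (f(x) + g(y) - |x-y|²)_+^{q-1} dμ(y) = c_ε for a constant c_ε > 0 independent of x. Then the function x ↦ f(x) - |x|² is concave on Ω. -/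
open Real Set MeasureTheory
open RealInnerProductSpace

private lemma aux_convex13 (p : ℝ) (hp : 1 ≤ p) (a b u v : ℝ) (ha : 0 ≤ a) (hb : 0 ≤ b)
    (hab : a + b = 1) :
    (max (a*u + b*v) 0) ^ p ≤ a * (max u 0) ^ p + b * (max v 0) ^ p := by
  have hU : (0:ℝ) ≤ max u 0 := le_max_right _ _
  have hV : (0:ℝ) ≤ max v 0 := le_max_right _ _
  have h1 : max (a*u + b*v) 0 ≤ a * max u 0 + b * max v 0 := by
    apply max_le
    · exact add_le_add (mul_le_mul_of_nonneg_left (le_max_left _ _) ha)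
        (mul_le_mul_of_nonneg_left (le_max_left _ _) hb)
    · positivity
  calc (max (a*u + b*v) 0) ^ p ≤ (a * max u 0 + b * max v 0) ^ p :=
        Real.rpow_le_rpow (le_max_right _ _) h1 (le_trans zero_le_one hp)
    _ ≤ a * (max u 0) ^ p + b * (max v 0) ^ p := by
        have := (convexOn_rpow hp).2 (mem_Ici.2 hU) (mem_Ici.2 hV) ha hb hab
        simpa [smul_eq_mul] using this

private lemma aux_strict13 (p δ s : ℝ) (hp : 0 < p) (hδ : 0 < δ) (hs : 0 < s) :
    (max (s - δ) 0) ^ p < (max s 0) ^ p := by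
  rw [max_eq_left hs.le]
  rcases le_or_gt (s - δ) 0 with h | h
  · rw [max_eq_right h, Real.zero_rpow hp.ne']
    exact Real.rpow_pos_of_pos hs p
  · rw [max_eq_left h.le]
    exact Real.rpow_lt_rpow h.le (by linarith) hp

theorem stmt_13 (d : ℕ) (q ε cε : ℝ) (hq : 2 ≤ q) (hε : 0 < ε) (hcε : 0 < cε)
    (Ω : Set (EuclideanSpace ℝ (Fin d))) (hopen : IsOpen Ω) (hconv : Convex ℝ Ω)
    (μ : Measure (EuclideanSpace ℝ (Fin d))) [IsProbabilityMeasure μ]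
    (f g : EuclideanSpace ℝ (Fin d) → ℝ)
    (hf : ContinuousOn f Ω) (hg : Measurable g)
    (heq : ∀ x ∈ Ω, ∫ y, (max (f x + g y - ‖x - y‖^2) 0) ^ (q-1) ∂μ = cε) :
    ConcaveOn ℝ Ω (fun x => f x - ‖x‖^2) := by
  set p := q - 1 with hpdef
  have hp1 : 1 ≤ p := by simp only [hpdef]; linarith
  have hp0 : 0 < p := by linarith
  -- integrability comes for free: a non-integrable function has integral 0 ≠ cε
  have hInt : ∀ x ∈ Ω, Integrable (fun y => (max (f x + g y - ‖x - y‖^2) 0) ^ p) μ := by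
    intro x hx
    by_contra h
    have h2 := heq x hx
    rw [integral_undef h] at h2
    linarith
  -- measurability of the integrands
  have hAm : ∀ x : EuclideanSpace ℝ (Fin d),
      Measurable (fun y => f x + g y - ‖x - y‖^2) := by
    intro x
    exact (measurable_const.add hg).sub
      (((measurable_const.sub measurable_id).norm).pow_const 2)
  refine ⟨hconv, ?_⟩
  intro x0 hx0 x1 hx1 a b ha hb hab
  by_contra hcon
  push_neg at hcon
  set z := a • x0 + b • x1 with hzdef
  have hz : z ∈ Ω := hconv hx0 hx1 ha hb hab
  set δ : ℝ := (a • (f x0 - ‖x0‖^2) + b • (f x1 - ‖x1‖^2)) - (f z - ‖z‖^2) with hδdef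
  have hδ : 0 < δ := sub_pos.2 hcon
  set D : EuclideanSpace ℝ (Fin d) → ℝ :=
    fun y => a * (f x0 + g y - ‖x0 - y‖^2) + b * (f x1 + g y - ‖x1 - y‖^2) with hDdef
  -- the key affine identity
  have key : ∀ y, f z + g y - ‖z - y‖^2 = D y - δ := by
    intro y
    have e0 : ‖x0 - y‖^2 = ‖x0‖^2 - 2*⟪x0,y⟫ + ‖y‖^2 := norm_sub_sq_real x0 y
    have e1 : ‖x1 - y‖^2 = ‖x1‖^2 - 2*⟪x1,y⟫ + ‖y‖^2 := norm_sub_sq_real x1 y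
    have ez : ‖z - y‖^2 = ‖z‖^2 - 2*⟪z,y⟫ + ‖y‖^2 := norm_sub_sq_real z y
    have hi : ⟪z, y⟫ = a * ⟪x0,y⟫ + b * ⟪x1,y⟫ := by
      simp [hzdef, inner_add_left, real_inner_smul_left, Finset.mul_sum, mul_assoc]
    have hδe : δ = a*(f x0 - ‖x0‖^2) + b*(f x1 - ‖x1‖^2) - (f z - ‖z‖^2) := by
      simp [hδdef, smul_eq_mul]
    simp only [hDdef]
    rw [e0, e1, ez, hi, hδe]
    linear_combination (‖y‖^2 - g y) * hab
  have hI0 := hInt x0 hx0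
  have hI1 := hInt x1 hx1
  have hIz := hInt z hz
  have hkeyfun : (fun y => (max (f z + g y - ‖z - y‖^2) 0) ^ p)
      = fun y => (max (D y - δ) 0) ^ p := funext fun y => by rw [key y]
  have hIz' : Integrable (fun y => (max (D y - δ) 0) ^ p) μ := by rwa [hkeyfun] at hIz
  have hIzval : ∫ y, (max (D y - δ) 0) ^ p ∂μ = cε := by
    rw [← hkeyfun]; exact heq z hz
  -- the convex-combination function B
  have hBm : Measurable (fun y => (max (D y) 0) ^ p) :=
    (Real.continuous_rpow_const hp0.le).measurable.comp
      ((((hAm x0).const_mul a).add ((hAm x1).const_mul b)).max measurable_const)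
  have hconv_pt : ∀ y, (max (D y) 0) ^ p
      ≤ a * (max (f x0 + g y - ‖x0 - y‖^2) 0) ^ p
        + b * (max (f x1 + g y - ‖x1 - y‖^2) 0) ^ p := fun y =>
    aux_convex13 p hp1 a b _ _ ha hb hab
  have hBint : Integrable (fun y => (max (D y) 0) ^ p) μ := by
    apply Integrable.mono' ((hI0.const_mul a).add (hI1.const_mul b)) hBm.aestronglyMeasurable
    filter_upwards with y
    rw [Real.norm_eq_abs, abs_of_nonneg (Real.rpow_nonneg (le_max_right _ _) p)]
    exact hconv_pt y
  have ptwise1 : ∀ y, (max (D y - δ) 0) ^ p ≤ (max (D y) 0) ^ p := fun y =>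
    Real.rpow_le_rpow (le_max_right _ _) (max_le_max (by linarith) le_rfl) hp0.le
  have ineq1 : cε ≤ ∫ y, (max (D y) 0) ^ p ∂μ := by
    rw [← hIzval]; exact integral_mono hIz' hBint ptwise1
  have hsum : ∫ y, (a * (max (f x0 + g y - ‖x0 - y‖^2) 0) ^ p
      + b * (max (f x1 + g y - ‖x1 - y‖^2) 0) ^ p) ∂μ = cε := by
    rw [integral_add (hI0.const_mul a) (hI1.const_mul b), integral_const_mul,
      integral_const_mul, heq x0 hx0, heq x1 hx1]
    linear_combination cε * hab
  have ineq2 : ∫ y, (max (D y) 0) ^ p ∂μ ≤ cε := by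
    rw [← hsum]
    exact integral_mono hBint ((hI0.const_mul a).add (hI1.const_mul b)) hconv_pt
  have hBeq : ∫ y, (max (D y) 0) ^ p ∂μ = cε := le_antisymm ineq2 ineq1
  -- equality a.e.
  have hdiff : ∫ y, ((max (D y) 0) ^ p - (max (D y - δ) 0) ^ p) ∂μ = 0 := by
    rw [integral_sub hBint hIz', hBeq, hIzval, sub_self]
  have hnn : ∀ y, 0 ≤ (max (D y) 0) ^ p - (max (D y - δ) 0) ^ p := fun y =>
    sub_nonneg.2 (ptwise1 y)
  have hae : (fun y => (max (D y) 0) ^ p - (max (D y - δ) 0) ^ p) =ᵐ[μ] 0 :=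
    (integral_eq_zero_iff_of_nonneg hnn (hBint.sub hIz')).1 hdiff
  have hzero : (fun y => (max (D y) 0) ^ p) =ᵐ[μ] 0 := by
    filter_upwards [hae] with y hy
    simp only [Pi.zero_apply] at hy ⊢
    have hD : D y ≤ 0 := by
      by_contra hD
      push_neg at hD
      have := aux_strict13 p δ (D y) hp0 hδ hD
      linarith
    rw [max_eq_right hD, Real.zero_rpow hp0.ne']
  have : cε = 0 := by
    rw [← hBeq, integral_congr_ae hzero]
    simp
  linarith
end

section
/- Let λ, μ be compactly supported probability measures on ℝ^d, and let T be the optimal transport map from λ to μ for quadratic cost, assumed L-Lipschitz. Then for any coupling π ∈ Π(λ,μ): ∫ |T(x) - y|² dπ(x,y) ≤ 2L ( ∫ |x-y|² dπ(x,y) - ∫ |x - T(x)|² dλ(x) ). -/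
open Real Set MeasureTheory

lemma aux_line_deriv {E : Type*} [NormedAddCommGroup E] [InnerProductSpace ℝ E] [CompleteSpace E]
    {φ : E → ℝ} {T : E → E} (hgrad : ∀ x, HasGradientAt φ (T x) x) (x z : E) (t : ℝ) :
    HasDerivAt (fun t : ℝ => φ (x + t • (z - x)))
      ((inner ℝ (T (x + t • (z - x))) (z - x) : ℝ)) t := by
  have hline : HasDerivAt (fun t : ℝ => x + t • (z - x)) (z - x) t := by
    simpa using ((hasDerivAt_id t).smul_const (z - x)).const_add x
  have h := (hgrad (x + t • (z - x))).hasFDerivAt.comp_hasDerivAt t hline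
  simp at h
  exact h

lemma aux_grad_ineq {E : Type*} [NormedAddCommGroup E] [InnerProductSpace ℝ E] [CompleteSpace E]
    {φ : E → ℝ} (hconv : ConvexOn ℝ Set.univ φ) {x v : E}
    (h : HasGradientAt φ v x) (z : E) :
    φ x + (inner ℝ v (z - x) : ℝ) ≤ φ z := by
  set ψ : ℝ → ℝ := fun t : ℝ => φ (x + t • (z - x)) with hψdef
  have hψconv : ConvexOn ℝ Set.univ ψ := by
    have := hconv.comp_affineMap
      (AffineMap.const ℝ ℝ x + (LinearMap.toAffineMap (LinearMap.smulRight (LinearMap.id : ℝ →ₗ[ℝ] ℝ) (z - x))))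
    simpa [Function.comp_def] using this
  have hd : HasDerivAt ψ ((inner ℝ v (z - x) : ℝ)) 0 := by
    have hline : HasDerivAt (fun t : ℝ => x + t • (z - x)) (z - x) 0 := by
      simpa using ((hasDerivAt_id (0:ℝ)).smul_const (z - x)).const_add x
    have hx0 : x + (0:ℝ) • (z - x) = x := by simp
    have h' := h.hasFDerivAt
    rw [← hx0] at h'
    have h'' := h'.comp_hasDerivAt 0 hline
    simp at h''
    exact h''
  have hs := hψconv.le_slope_of_hasDerivAt (mem_univ (0:ℝ)) (mem_univ (1:ℝ)) one_pos hd
  have : slope ψ 0 1 = ψ 1 - ψ 0 := by simp [slope_def_field]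
  rw [this] at hs
  have h1 : ψ 1 = φ z := by simp [hψdef]
  have h0 : ψ 0 = φ x := by simp [hψdef]
  rw [h1, h0] at hs
  linarith

lemma aux_descent {E : Type*} [NormedAddCommGroup E] [InnerProductSpace ℝ E] [CompleteSpace E]
    {φ : E → ℝ} {T : E → E} {L : ℝ} (hL : 0 ≤ L)
    (hlip : LipschitzWith (Real.toNNReal L) T)
    (hgrad : ∀ x, HasGradientAt φ (T x) x) (x z : E) :
    φ z ≤ φ x + (inner ℝ (T x) (z - x) : ℝ) + L * ‖z - x‖^2 := by
  set f : ℝ → ℝ := fun t => φ (x + t • (z - x)) - t * (inner ℝ (T x) (z - x) : ℝ) with hfdef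
  set f' : ℝ → ℝ := fun t =>
    (inner ℝ (T (x + t • (z - x))) (z - x) : ℝ) - (inner ℝ (T x) (z - x) : ℝ) with hf'def
  have hder : ∀ t ∈ Set.Icc (0:ℝ) 1, HasDerivWithinAt f (f' t) (Set.Icc 0 1) t := by
    intro t _
    have h := ((aux_line_deriv hgrad x z t).sub
      ((hasDerivAt_id t).mul_const ((inner ℝ (T x) (z - x) : ℝ)))).hasDerivWithinAt
      (s := Set.Icc (0:ℝ) 1)
    simp only [id_eq, one_mul] at h
    exact h
  have hbound : ∀ t ∈ Set.Icc (0:ℝ) 1, ‖f' t‖ ≤ L * ‖z - x‖^2 := by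
    intro t ht
    have h1 : f' t = (inner ℝ (T (x + t • (z - x)) - T x) (z - x) : ℝ) := by
      simp only [hf'def, inner_sub_left]
    rw [h1]
    calc ‖(inner ℝ (T (x + t • (z - x)) - T x) (z - x) : ℝ)‖
        ≤ ‖T (x + t • (z - x)) - T x‖ * ‖z - x‖ := norm_inner_le_norm _ _
      _ ≤ (L * (t * ‖z - x‖)) * ‖z - x‖ := by
          gcongr
          have := hlip.dist_le_mul (x + t • (z - x)) x
          simp only [dist_eq_norm, add_sub_cancel_left] at this
          calc ‖T (x + t • (z - x)) - T x‖ ≤ (Real.toNNReal L : ℝ) * ‖t • (z - x)‖ := this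
            _ = L * (|t| * ‖z - x‖) := by
                rw [Real.coe_toNNReal _ hL, norm_smul]; simp
            _ = L * (t * ‖z - x‖) := by rw [abs_of_nonneg ht.1]
      _ ≤ (L * (1 * ‖z - x‖)) * ‖z - x‖ := by
          gcongr; exact ht.2
      _ = L * ‖z - x‖^2 := by ring
  have hmvt := Convex.norm_image_sub_le_of_norm_hasDerivWithin_le hder hbound (convex_Icc 0 1)
    (Set.left_mem_Icc.2 zero_le_one) (Set.right_mem_Icc.2 zero_le_one)
  have h0 : f 0 = φ x := by simp [hfdef]
  have h1 : f 1 = φ z - (inner ℝ (T x) (z - x) : ℝ) := by simp [hfdef]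
  rw [h0, h1] at hmvt
  have h2 : φ z - (inner ℝ (T x) (z - x) : ℝ) - φ x ≤ L * ‖z - x‖ ^ 2 := by
    have := le_trans (le_abs_self _) ((Real.norm_eq_abs _) ▸ hmvt)
    simpa using this
  linarith


lemma aux_integrable {α : Type*} [MeasurableSpace α] [TopologicalSpace α]
    [OpensMeasurableSpace α] (ν : Measure α) [IsFiniteMeasure ν] {K : Set α}
    (hK : IsCompact K) (hν : ν Kᶜ = 0) {f : α → ℝ} (hf : Continuous f) :
    Integrable f ν := by
  obtain ⟨C, hC⟩ := hK.exists_bound_of_continuousOn hf.continuousOn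
  refine (integrable_const C).mono' hf.aestronglyMeasurable ?_
  filter_upwards [MeasureTheory.mem_ae_iff.mpr hν] with x hx
  exact hC x hx

theorem stmt_14 (d : ℕ) (L : ℝ) (hL : 0 ≤ L)
    (lam mu : Measure (EuclideanSpace ℝ (Fin d)))
    [IsProbabilityMeasure lam] [IsProbabilityMeasure mu]
    (Klam Kmu : Set (EuclideanSpace ℝ (Fin d)))
    (hKlam : IsCompact Klam) (hlamK : lam Klamᶜ = 0)
    (hKmu : IsCompact Kmu) (hmuK : mu Kmuᶜ = 0)
    (T : EuclideanSpace ℝ (Fin d) → EuclideanSpace ℝ (Fin d))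
    (hpush : lam.map T = mu)
    (hlipT : LipschitzWith (Real.toNNReal L) T)
    (φ : EuclideanSpace ℝ (Fin d) → ℝ)
    (hφconv : ConvexOn ℝ Set.univ φ)
    (hgrad : ∀ x, HasGradientAt φ (T x) x)
    (pl : Measure (EuclideanSpace ℝ (Fin d) × EuclideanSpace ℝ (Fin d)))
    (hfst : pl.map Prod.fst = lam) (hsnd : pl.map Prod.snd = mu) :
    ∫ q, ‖T q.1 - q.2‖^2 ∂pl
      ≤ 2 * L * (∫ q, ‖q.1 - q.2‖^2 ∂pl - ∫ x, ‖x - T x‖^2 ∂lam) := by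
  have hTc : Continuous T := hlipT.continuous
  haveI : IsProbabilityMeasure pl := by
    constructor
    have h : pl.map Prod.fst Set.univ = 1 := by rw [hfst]; exact measure_univ
    rwa [Measure.map_apply measurable_fst MeasurableSet.univ, Set.preimage_univ] at h
  -- null complement of the product compact
  have h1 : pl (Prod.fst ⁻¹' Klamᶜ) = 0 := by
    calc pl (Prod.fst ⁻¹' Klamᶜ) = pl.map Prod.fst Klamᶜ :=
          (Measure.map_apply measurable_fst hKlam.isClosed.measurableSet.compl).symm
      _ = lam Klamᶜ := by rw [hfst]
      _ = 0 := hlamK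
  have h2 : pl (Prod.snd ⁻¹' Kmuᶜ) = 0 := by
    calc pl (Prod.snd ⁻¹' Kmuᶜ) = pl.map Prod.snd Kmuᶜ :=
          (Measure.map_apply measurable_snd hKmu.isClosed.measurableSet.compl).symm
      _ = mu Kmuᶜ := by rw [hsnd]
      _ = 0 := hmuK
  have hplK : pl ((Klam ×ˢ Kmu)ᶜ) = 0 := by
    refine measure_mono_null ?_ (measure_union_null h1 h2)
    intro q hq
    simp only [Set.mem_compl_iff, Set.mem_prod, not_and_or] at hq
    exact hq
  have haeK : ∀ᵐ q ∂pl, q.1 ∈ Klam ∧ q.2 ∈ Kmu := by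
    filter_upwards [MeasureTheory.mem_ae_iff.mpr hplK] with q hq
    exact hq
  -- integrability helpers
  have intPl : ∀ {f : EuclideanSpace ℝ (Fin d) × EuclideanSpace ℝ (Fin d) → ℝ}, Continuous f → Integrable f pl :=
    fun hf => aux_integrable pl (hKlam.prod hKmu) hplK hf
  have intLam : ∀ {f : EuclideanSpace ℝ (Fin d) → ℝ}, Continuous f → Integrable f lam :=
    fun hf => aux_integrable lam hKlam hlamK hf
  -- marginal identities
  have hmapfst : ∀ (f : EuclideanSpace ℝ (Fin d) → ℝ), Continuous f → ∫ q, f q.1 ∂pl = ∫ x, f x ∂lam := by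
    intro f hf
    conv_rhs => rw [← hfst]
    rw [integral_map measurable_fst.aemeasurable hf.aestronglyMeasurable]
  have hmapsnd : ∀ (f : EuclideanSpace ℝ (Fin d) → ℝ), Continuous f → ∫ q, f q.2 ∂pl = ∫ y, f y ∂mu := by
    intro f hf
    conv_rhs => rw [← hsnd]
    rw [integral_map measurable_snd.aemeasurable hf.aestronglyMeasurable]
  have hmapT : ∀ (f : EuclideanSpace ℝ (Fin d) → ℝ), Continuous f → ∫ y, f y ∂mu = ∫ x, f (T x) ∂lam := by
    intro f hf
    conv_lhs => rw [← hpush]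
    rw [integral_map hTc.aemeasurable hf.aestronglyMeasurable]
  rcases eq_or_lt_of_le hL with h0 | hLpos
  · -- L = 0 : T is constant
    have hTconst : ∀ x, T x = T 0 := by
      intro x
      have h := hlipT.dist_le_mul x 0
      rw [← h0] at h
      simp only [Real.toNNReal_zero, NNReal.coe_zero, zero_mul] at h
      exact dist_le_zero.mp h
    have hmu0 : pl (Prod.snd ⁻¹' ({T 0}ᶜ)) = 0 := by
      calc pl (Prod.snd ⁻¹' ({T 0}ᶜ)) = pl.map Prod.snd ({T 0}ᶜ) :=
            (Measure.map_apply measurable_snd (measurableSet_singleton _).compl).symm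
        _ = mu ({T 0}ᶜ) := by rw [hsnd]
        _ = lam.map T ({T 0}ᶜ) := by rw [hpush]
        _ = lam (T ⁻¹' ({T 0}ᶜ)) :=
            Measure.map_apply hTc.measurable (measurableSet_singleton _).compl
        _ = lam ∅ := by
            congr 1
            ext x
            simp [hTconst x]
        _ = 0 := measure_empty
    have hzero : ∫ q, ‖T q.1 - q.2‖^2 ∂pl = 0 := by
      rw [← integral_zero (EuclideanSpace ℝ (Fin d) × EuclideanSpace ℝ (Fin d)) ℝ (μ := pl)]
      apply integral_congr_ae
      filter_upwards [MeasureTheory.mem_ae_iff.mpr hmu0] with q hq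
      rw [hTconst q.1, show q.2 = T 0 from hq]
      simp
    rw [hzero, ← h0]
    norm_num
  · -- L > 0
    obtain ⟨Rl, hRlpos, hRl⟩ := hKlam.isBounded.subset_closedBall_lt 0 0
    obtain ⟨Rm, hRmpos, hRm⟩ := hKmu.isBounded.subset_closedBall_lt 0 0
    set MT : ℝ := ‖T 0‖ + L * Rl with hMT
    set R : ℝ := Rl + (Rm + MT) / (2*L) with hR
    have hMTnn : 0 ≤ MT := add_nonneg (norm_nonneg _) (mul_nonneg hL hRlpos.le)
    have hRpos : 0 < R :=
      add_pos_of_pos_of_nonneg hRlpos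
        (div_nonneg (add_nonneg hRmpos.le hMTnn) (by linarith))
    have hTbound : ∀ x ∈ Klam, ‖T x‖ ≤ MT := by
      intro x hx
      have h := hlipT.dist_le_mul x 0
      rw [Real.coe_toNNReal _ hL] at h
      have h2 : ‖T x - T 0‖ ≤ L * ‖x‖ := by
        simpa [dist_eq_norm, sub_zero] using h
      have h3 : ‖T x‖ - ‖T 0‖ ≤ ‖T x - T 0‖ := norm_sub_norm_le _ _
      have hx' : ‖x‖ ≤ Rl := mem_closedBall_zero_iff.mp (hRl hx)
      have h4 : L * ‖x‖ ≤ L * Rl := mul_le_mul_of_nonneg_left hx' hL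
      rw [hMT]; linarith
    set g : EuclideanSpace ℝ (Fin d) → ℝ :=
      fun y => sSup ((fun z => (inner ℝ z y : ℝ) - φ z) '' Metric.closedBall 0 R) with hg
    have hφlow : ∀ z, φ 0 + (inner ℝ (T 0) z : ℝ) ≤ φ z := by
      intro z
      have := aux_grad_ineq hφconv (hgrad 0) z
      simpa using this
    have hbdd : ∀ y, BddAbove ((fun z => (inner ℝ z y : ℝ) - φ z) '' Metric.closedBall 0 R) := by
      intro y
      refine ⟨R * ‖y‖ + (‖T 0‖ * R - φ 0), ?_⟩
      rintro w ⟨z, hz, rfl⟩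
      have hz' : ‖z‖ ≤ R := mem_closedBall_zero_iff.mp hz
      have h1 : (inner ℝ z y : ℝ) ≤ R * ‖y‖ :=
        le_trans (real_inner_le_norm z y) (mul_le_mul_of_nonneg_right hz' (norm_nonneg y))
      have h2 := hφlow z
      have h3 : -(‖T 0‖ * ‖z‖) ≤ (inner ℝ (T 0) z : ℝ) :=
        (abs_le.mp (abs_real_inner_le_norm (T 0) z)).1
      have h4 : ‖T 0‖ * ‖z‖ ≤ ‖T 0‖ * R := mul_le_mul_of_nonneg_left hz' (norm_nonneg _)
      simp only
      linarith
    have hgmem : ∀ (y z : EuclideanSpace ℝ (Fin d)), ‖z‖ ≤ R →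
        (inner ℝ z y : ℝ) - φ z ≤ g y := by
      intro y z hz
      exact le_csSup (hbdd y) ⟨z, mem_closedBall_zero_iff.mpr hz, rfl⟩
    have hBne : (Metric.closedBall (0 : EuclideanSpace ℝ (Fin d)) R).Nonempty :=
      ⟨0, Metric.mem_closedBall_self hRpos.le⟩
    have hgle : ∀ (y : EuclideanSpace ℝ (Fin d)) (C : ℝ),
        (∀ z, ‖z‖ ≤ R → (inner ℝ z y : ℝ) - φ z ≤ C) → g y ≤ C := by
      intro y C hC
      refine csSup_le (hBne.image _) ?_
      rintro w ⟨z, hz, rfl⟩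
      exact hC z (mem_closedBall_zero_iff.mp hz)
    have hgLip : LipschitzWith (Real.toNNReal R) g := by
      apply LipschitzWith.of_le_add_mul
      intro y y'
      apply hgle
      intro z hz
      have h1 := hgmem y' z hz
      have h2 : (inner ℝ z y : ℝ) - (inner ℝ z y' : ℝ) ≤ R * dist y y' := by
        have h3 : (inner ℝ z (y - y') : ℝ) ≤ ‖z‖ * ‖y - y'‖ := real_inner_le_norm _ _
        rw [inner_sub_right] at h3
        rw [dist_eq_norm]
        nlinarith [norm_nonneg (y - y')]
      rw [Real.coe_toNNReal _ hRpos.le]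
      linarith
    have hgc : Continuous g := hgLip.continuous
    have hkey : ∀ x ∈ Klam, ∀ y ∈ Kmu, ‖T x - y‖^2 ≤
        4*L*((inner ℝ x (T x) : ℝ) - (inner ℝ x y : ℝ) + g y - g (T x)) := by
      intro x hx y hy
      have hgTx : g (T x) ≤ (inner ℝ x (T x) : ℝ) - φ x := by
        apply hgle
        intro z hz
        have h1 := aux_grad_ineq hφconv (hgrad x) z
        have h2 : (inner ℝ (T x) (z - x) : ℝ) = (inner ℝ (T x) z : ℝ) - (inner ℝ (T x) x : ℝ) :=
          inner_sub_right _ _ _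
        have h3 : (inner ℝ z (T x) : ℝ) = (inner ℝ (T x) z : ℝ) := real_inner_comm _ _
        have h4 : (inner ℝ x (T x) : ℝ) = (inner ℝ (T x) x : ℝ) := real_inner_comm _ _
        linarith
      set zs := x + (2*L)⁻¹ • (y - T x) with hzs
      have hynorm : ‖y‖ ≤ Rm := mem_closedBall_zero_iff.mp (hRm hy)
      have hxnorm : ‖x‖ ≤ Rl := mem_closedBall_zero_iff.mp (hRl hx)
      have hTxnorm : ‖T x‖ ≤ MT := hTbound x hx
      have hzsx : zs - x = (2*L)⁻¹ • (y - T x) := by rw [hzs]; abel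
      have hzsnorm : ‖zs‖ ≤ R := by
        have h5 : ‖zs‖ ≤ ‖x‖ + ‖(2*L)⁻¹ • (y - T x)‖ := norm_add_le _ _
        have h6 : ‖(2*L)⁻¹ • (y - T x)‖ = (2*L)⁻¹ * ‖y - T x‖ := by
          rw [norm_smul, Real.norm_eq_abs, abs_of_pos (by positivity : (0:ℝ) < (2*L)⁻¹)]
        have h7 : ‖y - T x‖ ≤ Rm + MT := le_trans (norm_sub_le _ _) (by linarith)
        have h8 : (2*L)⁻¹ * ‖y - T x‖ ≤ (2*L)⁻¹ * (Rm + MT) :=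
          mul_le_mul_of_nonneg_left h7 (by positivity)
        have h9 : (2*L)⁻¹ * (Rm + MT) = (Rm + MT)/(2*L) := by ring
        rw [hR]
        linarith
      have hdes := aux_descent hL hlipT hgrad x zs
      have e1 : (inner ℝ zs y : ℝ) = (inner ℝ x y : ℝ) + (2*L)⁻¹ * (inner ℝ (y - T x) y : ℝ) := by
        rw [hzs, inner_add_left, real_inner_smul_left]
      have e2 : (inner ℝ (T x) (zs - x) : ℝ) = (2*L)⁻¹ * (inner ℝ (T x) (y - T x) : ℝ) := by
        rw [hzsx, real_inner_smul_right]
      have e3 : ‖zs - x‖^2 = (2*L)⁻¹^2 * ‖y - T x‖^2 := by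
        rw [hzsx, norm_smul, Real.norm_eq_abs,
          abs_of_pos (show (0:ℝ) < (2*L)⁻¹ by positivity)]
        ring
      have e4 : (inner ℝ (y - T x) y : ℝ) - (inner ℝ (T x) (y - T x) : ℝ) = ‖y - T x‖^2 := by
        have h5 := real_inner_self_eq_norm_sq (y - T x)
        have h6 : (inner ℝ (y - T x) (y - T x) : ℝ)
            = (inner ℝ (y - T x) y : ℝ) - (inner ℝ (y - T x) (T x) : ℝ) := inner_sub_right _ _ _
        have h7 : (inner ℝ (T x) (y - T x) : ℝ) = (inner ℝ (y - T x) (T x) : ℝ) :=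
          real_inner_comm _ _
        linarith
      have e5 : (2*L)⁻¹ * (inner ℝ (y - T x) y : ℝ) - (2*L)⁻¹ * (inner ℝ (T x) (y - T x) : ℝ)
          = (2*L)⁻¹ * ‖y - T x‖^2 := by rw [← mul_sub, e4]
      rw [e2, e3] at hdes
      have e6 : L * ((2*L)⁻¹^2 * ‖y - T x‖^2)
          = (2*L)⁻¹ * ‖y - T x‖^2 - (4*L)⁻¹ * ‖y - T x‖^2 := by
        field_simp
        ring
      rw [mul_comm L ((2*L)⁻¹^2 * ‖y - T x‖^2)] at hdes
      rw [mul_comm ((2*L)⁻¹^2 * ‖y - T x‖^2) L] at hdes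
      have hglow := hgmem y zs hzsnorm
      have hfinal : (inner ℝ x y : ℝ) - φ x + (4*L)⁻¹ * ‖y - T x‖^2 ≤ g y := by
        linarith [hglow, e1, hdes, e5, e6]
      have hnorm_rev : ‖T x - y‖^2 = ‖y - T x‖^2 := by rw [norm_sub_rev]
      have hcore : (4*L)⁻¹ * ‖y - T x‖^2 ≤
          (inner ℝ x (T x) : ℝ) - (inner ℝ x y : ℝ) + g y - g (T x) := by linarith
      calc ‖T x - y‖^2 = (4*L) * ((4*L)⁻¹ * ‖y - T x‖^2) := by
            rw [hnorm_rev, ← mul_assoc, mul_inv_cancel₀ (by positivity : (4:ℝ)*L ≠ 0), one_mul]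
        _ ≤ (4*L) * ((inner ℝ x (T x) : ℝ) - (inner ℝ x y : ℝ) + g y - g (T x)) :=
            mul_le_mul_of_nonneg_left hcore (by positivity)
        _ = 4*L*((inner ℝ x (T x) : ℝ) - (inner ℝ x y : ℝ) + g y - g (T x)) := by ring
    -- integration
    have haeineq : ∀ᵐ q ∂pl, ‖T q.1 - q.2‖^2 ≤
        4*L*((inner ℝ q.1 (T q.1) : ℝ) - (inner ℝ q.1 q.2 : ℝ) + g q.2 - g (T q.1)) := by
      filter_upwards [haeK] with q hq
      exact hkey q.1 hq.1 q.2 hq.2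
    have intA : Integrable (fun q : EuclideanSpace ℝ (Fin d) × EuclideanSpace ℝ (Fin d) =>
        (inner ℝ q.1 (T q.1) : ℝ)) pl := intPl (continuous_fst.inner (hTc.comp continuous_fst))
    have intB : Integrable (fun q : EuclideanSpace ℝ (Fin d) × EuclideanSpace ℝ (Fin d) =>
        (inner ℝ q.1 q.2 : ℝ)) pl := intPl (continuous_fst.inner continuous_snd)
    have intC : Integrable (fun q : EuclideanSpace ℝ (Fin d) × EuclideanSpace ℝ (Fin d) =>
        g q.2) pl := intPl (hgc.comp continuous_snd)
    have intD : Integrable (fun q : EuclideanSpace ℝ (Fin d) × EuclideanSpace ℝ (Fin d) =>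
        g (T q.1)) pl := intPl ((hgc.comp hTc).comp continuous_fst)
    have int1 : Integrable (fun q : EuclideanSpace ℝ (Fin d) × EuclideanSpace ℝ (Fin d) =>
        ‖T q.1 - q.2‖^2) pl := intPl (by fun_prop)
    have intN1 : Integrable (fun q : EuclideanSpace ℝ (Fin d) × EuclideanSpace ℝ (Fin d) =>
        ‖q.1‖^2) pl := intPl (by fun_prop)
    have intN2 : Integrable (fun q : EuclideanSpace ℝ (Fin d) × EuclideanSpace ℝ (Fin d) =>
        ‖q.2‖^2) pl := intPl (by fun_prop)
    have intRHS : Integrable (fun q : EuclideanSpace ℝ (Fin d) × EuclideanSpace ℝ (Fin d) =>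
        4*L*((inner ℝ q.1 (T q.1) : ℝ) - (inner ℝ q.1 q.2 : ℝ) + g q.2 - g (T q.1))) pl :=
      (((intA.sub intB).add intC).sub intD).const_mul (4*L)
    have hIle := integral_mono_ae int1 intRHS haeineq
    have hsplit : ∫ q, 4*L*((inner ℝ q.1 (T q.1) : ℝ) - (inner ℝ q.1 q.2 : ℝ) + g q.2 - g (T q.1)) ∂pl
        = 4*L*((∫ q, (inner ℝ q.1 (T q.1) : ℝ) ∂pl) - (∫ q, (inner ℝ q.1 q.2 : ℝ) ∂pl)
            + (∫ q, g q.2 ∂pl) - (∫ q, g (T q.1) ∂pl)) := by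
      have s1 : ∫ q, ((inner ℝ q.1 (T q.1) : ℝ) - (inner ℝ q.1 q.2 : ℝ) + g q.2 - g (T q.1)) ∂pl
          = (∫ q, ((inner ℝ q.1 (T q.1) : ℝ) - (inner ℝ q.1 q.2 : ℝ) + g q.2) ∂pl)
            - ∫ q, g (T q.1) ∂pl :=
        integral_sub ((intA.sub intB).add intC) intD
      have s2 : ∫ q, ((inner ℝ q.1 (T q.1) : ℝ) - (inner ℝ q.1 q.2 : ℝ) + g q.2) ∂pl
          = (∫ q, ((inner ℝ q.1 (T q.1) : ℝ) - (inner ℝ q.1 q.2 : ℝ)) ∂pl) + ∫ q, g q.2 ∂pl :=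
        integral_add (intA.sub intB) intC
      have s3 : ∫ q, ((inner ℝ q.1 (T q.1) : ℝ) - (inner ℝ q.1 q.2 : ℝ)) ∂pl
          = (∫ q, (inner ℝ q.1 (T q.1) : ℝ) ∂pl) - ∫ q, (inner ℝ q.1 q.2 : ℝ) ∂pl :=
        integral_sub intA intB
      rw [integral_const_mul, s1, s2, s3]
    have hCD : ∫ q, g q.2 ∂pl = ∫ q, g (T q.1) ∂pl := by
      rw [hmapsnd g hgc, hmapT g hgc]
      exact (hmapfst (fun x => g (T x)) (hgc.comp hTc)).symm
    have hN1 : ∫ q, ‖q.1‖^2 ∂pl = ∫ x, ‖x‖^2 ∂lam :=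
      hmapfst (fun x => ‖x‖^2) (by fun_prop)
    have hN2 : ∫ q, ‖q.2‖^2 ∂pl = ∫ x, ‖T x‖^2 ∂lam := by
      rw [hmapsnd (fun y => ‖y‖^2) (by fun_prop), hmapT (fun y => ‖y‖^2) (by fun_prop)]
    have hA' : ∫ q, (inner ℝ q.1 (T q.1) : ℝ) ∂pl = ∫ x, (inner ℝ x (T x) : ℝ) ∂lam :=
      hmapfst (fun x => (inner ℝ x (T x) : ℝ)) (continuous_id.inner hTc)
    have intLN1 : Integrable (fun x : EuclideanSpace ℝ (Fin d) => ‖x‖^2) lam :=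
      intLam (by fun_prop)
    have intLN2 : Integrable (fun x : EuclideanSpace ℝ (Fin d) => ‖T x‖^2) lam :=
      intLam (by fun_prop)
    have intLA : Integrable (fun x : EuclideanSpace ℝ (Fin d) => (inner ℝ x (T x) : ℝ)) lam :=
      intLam (continuous_id.inner hTc)
    have hI2 : ∫ q, ‖q.1 - q.2‖^2 ∂pl
        = (∫ q, ‖q.1‖^2 ∂pl) - 2*(∫ q, (inner ℝ q.1 q.2 : ℝ) ∂pl) + (∫ q, ‖q.2‖^2 ∂pl) := by
      have hfe : (fun q : EuclideanSpace ℝ (Fin d) × EuclideanSpace ℝ (Fin d) => ‖q.1 - q.2‖^2)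
          = fun q => ‖q.1‖^2 - 2*(inner ℝ q.1 q.2 : ℝ) + ‖q.2‖^2 :=
        funext fun q => norm_sub_sq_real _ _
      have s4 : ∫ q, (‖q.1‖^2 - 2*(inner ℝ q.1 q.2 : ℝ) + ‖q.2‖^2) ∂pl
          = (∫ q, (‖q.1‖^2 - 2*(inner ℝ q.1 q.2 : ℝ)) ∂pl) + ∫ q, ‖q.2‖^2 ∂pl :=
        integral_add (intN1.sub (intB.const_mul 2)) intN2
      have s5 : ∫ q, (‖q.1‖^2 - 2*(inner ℝ q.1 q.2 : ℝ)) ∂pl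
          = (∫ q, ‖q.1‖^2 ∂pl) - ∫ q, 2*(inner ℝ q.1 q.2 : ℝ) ∂pl :=
        integral_sub intN1 (intB.const_mul 2)
      rw [hfe, s4, s5, integral_const_mul]
    have hI3 : ∫ x, ‖x - T x‖^2 ∂lam
        = (∫ x, ‖x‖^2 ∂lam) - 2*(∫ x, (inner ℝ x (T x) : ℝ) ∂lam) + (∫ x, ‖T x‖^2 ∂lam) := by
      have hfe : (fun x : EuclideanSpace ℝ (Fin d) => ‖x - T x‖^2)
          = fun x => ‖x‖^2 - 2*(inner ℝ x (T x) : ℝ) + ‖T x‖^2 :=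
        funext fun x => norm_sub_sq_real _ _
      have s4 : ∫ x, (‖x‖^2 - 2*(inner ℝ x (T x) : ℝ) + ‖T x‖^2) ∂lam
          = (∫ x, (‖x‖^2 - 2*(inner ℝ x (T x) : ℝ)) ∂lam) + ∫ x, ‖T x‖^2 ∂lam :=
        integral_add (intLN1.sub (intLA.const_mul 2)) intLN2
      have s5 : ∫ x, (‖x‖^2 - 2*(inner ℝ x (T x) : ℝ)) ∂lam
          = (∫ x, ‖x‖^2 ∂lam) - ∫ x, 2*(inner ℝ x (T x) : ℝ) ∂lam :=
        integral_sub intLN1 (intLA.const_mul 2)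
      rw [hfe, s4, s5, integral_const_mul]
    have hfin : 2 * L * ((∫ q, ‖q.1 - q.2‖^2 ∂pl) - ∫ x, ‖x - T x‖^2 ∂lam)
        = 4*L*((∫ q, (inner ℝ q.1 (T q.1) : ℝ) ∂pl) - (∫ q, (inner ℝ q.1 q.2 : ℝ) ∂pl)
            + (∫ q, g q.2 ∂pl) - (∫ q, g (T q.1) ∂pl)) := by
      rw [hI2, hI3, ← hA', ← hN1, ← hN2, hCD]
      ring
    rw [hfin]
    rw [hsplit] at hIle
    exact hIle
end

section
/- Let λ, μ be compactly supported probability measures on ℝ^d, h : [0,∞) → ℝ strictly convex with strictly increasing differentiable inverse (h')^{-1} on its range, and suppose f ∈ L¹(λ), g ∈ L¹(μ) satisfy the Schrödinger equation ∫ (h')^{-1}(f(x)+g(y)-|x-y|²) dμ(y) = 1 for all x in a full-measure subset X₀ of supp λ. Then f is Lipschitz on X₀ with Lipschitz constant depending only on the diameters of supp λ and supp μ; in particular f admits a unique Lipschitz extension to supp λ. -/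
open Real Set MeasureTheory

theorem stmt_17 (d : ℕ) (R : ℝ) (hR : 0 < R)
    (lam mu : Measure (EuclideanSpace ℝ (Fin d)))
    [IsProbabilityMeasure lam] [IsProbabilityMeasure mu]
    (φ : ℝ → ℝ) (hφ : StrictMono φ)
    (f g : EuclideanSpace ℝ (Fin d) → ℝ)
    (hf : Integrable f lam) (hg : Integrable g mu)
    (X₀ : Set (EuclideanSpace ℝ (Fin d)))
    (hX₀full : lam X₀ᶜ = 0)
    (hX₀R : X₀ ⊆ Metric.closedBall 0 R)
    (hmuR : mu (Metric.closedBall 0 R)ᶜ = 0)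
    (hschrod : ∀ x ∈ X₀, ∫ y, φ (f x + g y - ‖x - y‖^2) ∂mu = 1) :
    LipschitzOnWith (Real.toNNReal (4*R)) f X₀ ∧
    (∃ F : EuclideanSpace ℝ (Fin d) → ℝ,
      LipschitzWith (Real.toNNReal (4*R)) F ∧ Set.EqOn F f X₀) ∧
    (∀ F₁ F₂ : EuclideanSpace ℝ (Fin d) → ℝ,
      ContinuousOn F₁ (closure X₀) → ContinuousOn F₂ (closure X₀) →
      Set.EqOn F₁ f X₀ → Set.EqOn F₂ f X₀ → Set.EqOn F₁ F₂ (closure X₀)) := by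
  have hae : ∀ᵐ y ∂mu, y ∈ Metric.closedBall (0 : EuclideanSpace ℝ (Fin d)) R := by
    rw [MeasureTheory.ae_iff]
    exact hmuR
  have key : ∀ x ∈ X₀, ∀ x' ∈ X₀, f x ≤ f x' + (4*R) * dist x x' := by
    intro x hx x' hx'
    by_contra hcon
    push_neg at hcon
    set A : EuclideanSpace ℝ (Fin d) → ℝ := fun y => φ (f x + g y - ‖x - y‖^2) with hA
    set B : EuclideanSpace ℝ (Fin d) → ℝ := fun y => φ (f x' + g y - ‖x' - y‖^2) with hB
    have hIA1 : ∫ y, A y ∂mu = 1 := hschrod x hx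
    have hIB1 : ∫ y, B y ∂mu = 1 := hschrod x' hx'
    have hIA : Integrable A mu := by
      by_contra h
      rw [integral_undef h] at hIA1
      exact one_ne_zero hIA1.symm
    have hIB : Integrable B mu := by
      by_contra h
      rw [integral_undef h] at hIB1
      exact one_ne_zero hIB1.symm
    have hxR : ‖x‖ ≤ R := by simpa using hX₀R hx
    have hx'R : ‖x'‖ ≤ R := by simpa using hX₀R hx'
    have hlt : ∀ᵐ y ∂mu, B y < A y := by
      filter_upwards [hae] with y hy
      have hyR : ‖y‖ ≤ R := by simpa using hy
      have h1 : ‖x - y‖ ≤ 2 * R := by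
        calc ‖x - y‖ ≤ ‖x‖ + ‖y‖ := norm_sub_le _ _
        _ ≤ 2 * R := by linarith
      have h2 : ‖x' - y‖ ≤ 2 * R := by
        calc ‖x' - y‖ ≤ ‖x'‖ + ‖y‖ := norm_sub_le _ _
        _ ≤ 2 * R := by linarith
      have h3 : ‖x - y‖ - ‖x' - y‖ ≤ ‖x - x'‖ := by
        have := abs_norm_sub_norm_le (x - y) (x' - y)
        have heq : (x - y) - (x' - y) = x - x' := by abel
        rw [heq] at this
        exact (abs_le.1 this).2
      have h4 : (0:ℝ) ≤ ‖x - x'‖ := norm_nonneg _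
      have h5 : (0:ℝ) ≤ ‖x - y‖ := norm_nonneg _
      have h6 : (0:ℝ) ≤ ‖x' - y‖ := norm_nonneg _
      have hdist : dist x x' = ‖x - x'‖ := dist_eq_norm x x'
      have hkey : ‖x - y‖^2 - ‖x' - y‖^2 ≤ 4 * R * ‖x - x'‖ := by
        nlinarith [mul_le_mul_of_nonneg_right h3 (by linarith : (0:ℝ) ≤ ‖x - y‖ + ‖x' - y‖)]
      apply hφ
      rw [hdist] at hcon
      linarith
    have hnonneg : 0 ≤ᵐ[mu] fun y => A y - B y := hlt.mono fun y hy => by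
      simp only [Pi.zero_apply]; linarith
    have hsub : Integrable (fun y => A y - B y) mu := hIA.sub hIB
    have hzero : ∫ y, (A y - B y) ∂mu = 0 := by
      rw [integral_sub hIA hIB, hIA1, hIB1]; ring
    have heq0 : (fun y => A y - B y) =ᵐ[mu] 0 :=
      (integral_eq_zero_iff_of_nonneg_ae hnonneg hsub).1 hzero
    have : ∀ᵐ y ∂mu, False := by
      filter_upwards [hlt, heq0] with y h1 h2
      simp only [Pi.zero_apply] at h2
      linarith
    have hne : (MeasureTheory.ae mu).NeBot :=
      MeasureTheory.ae_neBot.2 (IsProbabilityMeasure.ne_zero mu)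
    exact this.exists.choose_spec
  have hlip : LipschitzOnWith (Real.toNNReal (4*R)) f X₀ :=
    LipschitzOnWith.of_le_add_mul' (4*R) key
  obtain ⟨F, hF, hFe⟩ := hlip.extend_real
  refine ⟨hlip, ⟨F, hF, hFe.symm⟩, ?_⟩
  intro F₁ F₂ hc1 hc2 he1 he2
  exact Set.EqOn.of_subset_closure (fun x hx => (he1 hx).trans (he2 hx).symm)
    hc1 hc2 subset_closure subset_rfl
end
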